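/- Kernel of the linearized Allen–Cahn operator: Assume W satisfies the double-well assumptions and let q be the standing wave. If g : ℝ → ℝ is a bounded C² function satisfying −g''(s) + W''(q(s)) g(s) = 0 for all s ∈ ℝ, then there is a constant c ∈ ℝ such that g(s) = c q'(s) for all s ∈ ℝ. -/

import Mathlib

/-!
Both `q'` and `g` solve the linear equation `u'' = W''(q) u`, so their Wronskian
`g' q' - g q''` is constant. The energy identity `q'² = 2 W(q)` makes `q' > 0` and
forces `q'` and `q'' = W'(q)` to vanish at `+∞`; along points where the bounded
function `g` has bounded slope the Wronskian therefore tends to `0`, so it vanishes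
identically and `(g / q')' = 0`.
-/

open Set Filter Topology

noncomputable section

def DoubleWell (W : ℝ → ℝ) : Prop :=
  ContDiff ℝ 3 W ∧
  (∀ u ∈ Set.Icc (-1:ℝ) 1, 0 ≤ W u) ∧
  W (-1) = 0 ∧ W 1 = 0 ∧
  (∀ u ∈ Set.Ioo (-1:ℝ) 1, 0 < W u) ∧
  deriv W (-1) = 0 ∧ deriv W 0 = 0 ∧ deriv W 1 = 0 ∧
  (∀ u ∈ Set.Ioo (-1:ℝ) 0, 0 < deriv W u) ∧
  (∀ u ∈ Set.Ioo (0:ℝ) 1, deriv W u < 0) ∧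
  0 < deriv (deriv W) (-1) ∧ 0 < deriv (deriv W) 1 ∧ deriv (deriv W) 0 < 0

def StandingWave (W q : ℝ → ℝ) : Prop :=
  ContDiff ℝ 2 q ∧ StrictMono q ∧ (∀ s, q s ∈ Set.Ioo (-1:ℝ) 1) ∧ q 0 = 0 ∧
  (∀ s, deriv (deriv q) s = deriv W (q s)) ∧
  Filter.Tendsto q Filter.atTop (nhds 1) ∧ Filter.Tendsto q Filter.atBot (nhds (-1))

theorem exists_seq_tendsto_atTop_deriv_eq_sub {f : ℝ → ℝ} (hf : Differentiable ℝ f) :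
    ∃ t : ℕ → ℝ, Tendsto t atTop atTop ∧ ∀ n : ℕ, deriv f (t n) = f (n + 1) - f n := by
  have hmvt (n : ℕ) : ∃ c ∈ Ioo (n : ℝ) (n + 1), deriv f c = (f (n + 1) - f n) / (n + 1 - n) :=
    exists_deriv_eq_slope f (by linarith) hf.continuous.continuousOn hf.differentiableOn
  choose t ht hslope using hmvt
  refine ⟨t, tendsto_atTop_mono (fun n => (ht n).1.le) tendsto_natCast_atTop_atTop, fun n => ?_⟩
  rw [hslope, add_sub_cancel_left, div_one]

section Wronskian

variable {V f f' g g' : ℝ → ℝ}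

theorem hasDerivAt_wronskian {x : ℝ} (hf : HasDerivAt f (f' x) x)
    (hf' : HasDerivAt f' (V x * f x) x) (hg : HasDerivAt g (g' x) x)
    (hg' : HasDerivAt g' (V x * g x) x) :
    HasDerivAt (fun s => g' s * f s - g s * f' s) 0 x :=
  ((hg'.mul hf).sub (hg.mul hf')).congr_deriv (by ring)

theorem exists_wronskian_eq_const (hf : ∀ x, HasDerivAt f (f' x) x)
    (hf' : ∀ x, HasDerivAt f' (V x * f x) x) (hg : ∀ x, HasDerivAt g (g' x) x)
    (hg' : ∀ x, HasDerivAt g' (V x * g x) x) :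
    ∃ w, ∀ s, g' s * f s - g s * f' s = w := by
  have hw x := hasDerivAt_wronskian (hf x) (hf' x) (hg x) (hg' x)
  exact ⟨_, fun s => is_const_of_deriv_eq_zero (fun x => (hw x).differentiableAt)
    (fun x => (hw x).deriv) s 0⟩

theorem wronskian_eq_zero_of_tendsto {w B : ℝ} (hw : ∀ s, g' s * f s - g s * f' s = w)
    (hg : ∀ s, HasDerivAt g (g' s) s) (hgB : ∀ s, |g s| ≤ B)
    (hf : Tendsto f atTop (𝓝 0)) (hf' : Tendsto f' atTop (𝓝 0)) : w = 0 := by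
  obtain ⟨t, ht, hslope⟩ :=
    exists_seq_tendsto_atTop_deriv_eq_sub fun x => (hg x).differentiableAt
  have hg't (n : ℕ) : |g' (t n)| ≤ 2 * B := by
    rw [← (hg (t n)).deriv, hslope n]
    linarith [abs_sub (g (n + 1)) (g n), hgB (n + 1), hgB n]
  have hbound : Tendsto (fun n => 2 * B * |f (t n)| + B * |f' (t n)|) atTop (𝓝 0) := by
    simpa using ((hf.comp ht).abs.const_mul (2 * B)).add ((hf'.comp ht).abs.const_mul B)
  have hw0 : Tendsto (fun _ : ℕ => w) atTop (𝓝 0) := by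
    refine squeeze_zero_norm (fun n => ?_) hbound
    rw [← hw (t n), Real.norm_eq_abs]
    calc |g' (t n) * f (t n) - g (t n) * f' (t n)|
        ≤ |g' (t n)| * |f (t n)| + |g (t n)| * |f' (t n)| := by
          rw [← abs_mul, ← abs_mul]; exact abs_sub _ _
      _ ≤ 2 * B * |f (t n)| + B * |f' (t n)| := by
          gcongr
          · exact hg't n
          · exact hgB _
  exact tendsto_nhds_unique tendsto_const_nhds hw0

theorem exists_eq_const_mul_of_wronskian_eq_zero (hf : ∀ x, HasDerivAt f (f' x) x)
    (hg : ∀ x, HasDerivAt g (g' x) x) (hf0 : ∀ x, f x ≠ 0)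
    (hw : ∀ x, g' x * f x - g x * f' x = 0) : ∃ c, ∀ x, g x = c * f x := by
  have hquot x : HasDerivAt (fun s => g s / f s) 0 x := by
    have := (hg x).div (hf x) (hf0 x)
    rwa [hw x, zero_div] at this
  refine ⟨g 0 / f 0, fun x => ?_⟩
  rw [← is_const_of_deriv_eq_zero (fun x => (hquot x).differentiableAt)
    (fun x => (hquot x).deriv) x 0, div_mul_cancel₀ _ (hf0 x)]

end Wronskian

namespace StandingWave

variable {W q : ℝ → ℝ}

theorem hasDerivAt_deriv (hq : StandingWave W q) (s : ℝ) :
    HasDerivAt (deriv q) (deriv W (q s)) s := by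
  obtain ⟨hq2, -, -, -, hq'', -⟩ := hq
  rw [← hq'' s]
  exact (hq2.differentiable_deriv_two s).hasDerivAt

theorem tendsto_comp_atTop (hq : StandingWave W q) {F : ℝ → ℝ} (hF : Continuous F) :
    Tendsto (fun s => F (q s)) atTop (𝓝 (F 1)) :=
  (hF.tendsto 1).comp hq.2.2.2.2.2.1

theorem deriv_sq_eq (hW : Differentiable ℝ W) (hW1 : W 1 = 0) (hq : StandingWave W q)
    (s : ℝ) : deriv q s ^ 2 = 2 * W (q s) := by
  have hqd : Differentiable ℝ q := hq.1.differentiable two_ne_zero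
  have henergy x : HasDerivAt (fun s => deriv q s ^ 2 - 2 * W (q s)) 0 x :=
    (((hq.hasDerivAt_deriv x).pow 2).sub
      (((hW (q x)).hasDerivAt.comp x (hqd x).hasDerivAt).const_mul 2)).congr_deriv
      (by push_cast; ring)
  set E := deriv q 0 ^ 2 - 2 * W (q 0)
  have hE x : deriv q x ^ 2 - 2 * W (q x) = E :=
    is_const_of_deriv_eq_zero (fun x => (henergy x).differentiableAt)
      (fun x => (henergy x).deriv) x 0
  have hWq : Tendsto (fun s => W (q s)) atTop (𝓝 0) := hW1 ▸ hq.tendsto_comp_atTop hW.continuous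
  -- `E` is the limit of `q'²`, which vanishes along mean-value points of `[n, n + 1]`
  -- because `q` converges.
  obtain ⟨t, ht, hslope⟩ := exists_seq_tendsto_atTop_deriv_eq_sub hqd
  have h2W : Tendsto (fun n => 2 * W (q (t n)) + E) atTop (𝓝 E) := by
    simpa using ((hWq.comp ht).const_mul 2).add_const E
  have hq'E : Tendsto (fun n => deriv q (t n) ^ 2) atTop (𝓝 E) :=
    h2W.congr fun n => by linarith [hE (t n)]
  have hincr : Tendsto (fun n : ℕ => q (n + 1) - q n) atTop (𝓝 0) := by
    have hqn := (hq.tendsto_comp_atTop continuous_id).comp tendsto_natCast_atTop_atTop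
    simpa using ((tendsto_add_atTop_iff_nat 1).2 hqn).sub hqn
  have hq'0 : Tendsto (fun n => deriv q (t n) ^ 2) atTop (𝓝 0) := by
    simpa [hslope] using hincr.pow 2
  linarith [hE s, tendsto_nhds_unique hq'E hq'0]

theorem deriv_pos (hW : Differentiable ℝ W) (hW1 : W 1 = 0)
    (hWpos : ∀ u ∈ Ioo (-1 : ℝ) 1, 0 < W u) (hq : StandingWave W q) (s : ℝ) :
    0 < deriv q s := by
  have hsq := hq.deriv_sq_eq hW hW1 s
  obtain ⟨-, hmono, hrange, -⟩ := hq
  refine lt_of_le_of_ne hmono.monotone.deriv_nonneg fun h => ?_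
  rw [← h] at hsq
  linarith [hWpos _ (hrange s)]

theorem tendsto_deriv_atTop (hW : Differentiable ℝ W) (hW1 : W 1 = 0)
    (hq : StandingWave W q) : Tendsto (deriv q) atTop (𝓝 0) := by
  have hWq : Tendsto (fun s => √(2 * W (q s))) atTop (𝓝 0) := by
    simpa [hW1] using (hq.tendsto_comp_atTop hW.continuous).const_mul 2 |>.sqrt
  refine (tendsto_zero_iff_abs_tendsto_zero _).2 (hWq.congr fun s => ?_)
  show √(2 * W (q s)) = |deriv q s|
  rw [← hq.deriv_sq_eq hW hW1 s, Real.sqrt_sq_eq_abs]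

end StandingWave

/-- The kernel of the linearized Allen–Cahn operator among bounded C² functions
is spanned by q'. -/
theorem kernel_linearized_allen_cahn (W q : ℝ → ℝ) (hW : DoubleWell W)
    (hq : StandingWave W q) (g : ℝ → ℝ) (hgb : ∃ B : ℝ, ∀ s, |g s| ≤ B)
    (hgs : ContDiff ℝ 2 g)
    (hode : ∀ s : ℝ, -deriv (deriv g) s + deriv (deriv W) (q s) * g s = 0) :
    ∃ c : ℝ, ∀ s : ℝ, g s = c * deriv q s := by
  obtain ⟨hW3, -, -, hW1, hWpos, -, -, hW'1, -⟩ := hW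
  obtain ⟨B, hB⟩ := hgb
  have hWd : Differentiable ℝ W := hW3.differentiable (by norm_num)
  have hW'd : Differentiable ℝ (deriv W) := (hW3.of_le (by norm_num)).differentiable_deriv_two
  have hqd : Differentiable ℝ q := hq.1.differentiable two_ne_zero
  have hq'' s : HasDerivAt (fun t => deriv W (q t)) (deriv (deriv W) (q s) * deriv q s) s :=
    (hW'd (q s)).hasDerivAt.comp s (hqd s).hasDerivAt
  have hg s : HasDerivAt g (deriv g s) s := (hgs.differentiable two_ne_zero s).hasDerivAt
  have hg' s : HasDerivAt (deriv g) (deriv (deriv W) (q s) * g s) s := by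
    rw [← neg_add_eq_zero.1 (hode s)]
    exact (hgs.differentiable_deriv_two s).hasDerivAt
  obtain ⟨w, hw⟩ := exists_wronskian_eq_const (V := fun s => deriv (deriv W) (q s))
    hq.hasDerivAt_deriv hq'' hg hg'
  have hw0 : w = 0 := wronskian_eq_zero_of_tendsto hw hg hB (hq.tendsto_deriv_atTop hWd hW1)
    (hW'1 ▸ hq.tendsto_comp_atTop hW'd.continuous)
  exact exists_eq_const_mul_of_wronskian_eq_zero hq.hasDerivAt_deriv hg
    (fun s => (hq.deriv_pos hWd hW1 hWpos s).ne') (hw0 ▸ hw)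

end
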